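/- For all complex numbers u, v with u ≠ v and u, v ∉ {z_1,…,z_L}, the N²×N² matrices over End(W) satisfy [T(u)_a, T(v)_b] = [T(u)_a + T(v)_b, (u − v)^{−1} P_{ab}]; that is, the L-site evaluation realization T_a(u) = Σ_ℓ (u − z_ℓ)^{−1} 𝐏_{aℓ} satisfies the defining exchange relation of the half loop algebra of gl_N. -/

import Mathlib

open Matrix
open scoped TensorProduct

noncomputable section

/-- `τ = e^{2πi/n}`. -/
def tau (n : ℕ) : ℂ := Complex.exp (2 * Real.pi * Complex.I / n)

variable {N L : ℕ}
variable {V : Fin L → Type} [∀ ℓ, AddCommGroup (V ℓ)] [∀ ℓ, Module ℂ (V ℓ)]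
variable (ρ : ∀ ℓ, Matrix (Fin N) (Fin N) ℂ →ₗ[ℂ] Module.End ℂ (V ℓ))

/-- The operator `X^{(ℓ)}` on `W = ⨂_ℓ V ℓ`, acting as `ρ ℓ X` in the `ℓ`-th tensor
factor and as the identity elsewhere. -/
def siteOp (ℓ : Fin L) (X : Matrix (Fin N) (Fin N) ℂ) :
    Module.End ℂ (⨂[ℂ] i, V i) :=
  PiTensorProduct.map (Function.update (fun i => (LinearMap.id : V i →ₗ[ℂ] V i)) ℓ (ρ ℓ X))

/-- The matrix `𝐏_{aℓ}` over `End W`, whose `(i,j)` entry is `(E_{ji})^{(ℓ)}`. -/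
def Pm (ℓ : Fin L) : Matrix (Fin N) (Fin N) (Module.End ℂ (⨂[ℂ] i, V i)) :=
  Matrix.of fun i j => siteOp ρ ℓ (Matrix.single j i 1)

/-- `T_a(u) = Σ_ℓ (u − z_ℓ)⁻¹ 𝐏_{aℓ}`. -/
def Tm (z : Fin L → ℂ) (u : ℂ) : Matrix (Fin N) (Fin N) (Module.End ℂ (⨂[ℂ] i, V i)) :=
  ∑ ℓ : Fin L, (u - z ℓ)⁻¹ • Pm ρ ℓ

/-- A scalar `N×N` matrix viewed as a matrix over `End W`. -/
def emb (V : Fin L → Type) [∀ ℓ, AddCommGroup (V ℓ)] [∀ ℓ, Module ℂ (V ℓ)]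
    (M : Matrix (Fin N) (Fin N) ℂ) :
    Matrix (Fin N) (Fin N) (Module.End ℂ (⨂[ℂ] i, V i)) :=
  M.map (algebraMap ℂ (Module.End ℂ (⨂[ℂ] i, V i)))

/-- `B_a(u) = Σ_{k=0}^{n−1} τ^k G^k T_a(τ^k u) G^{−k}`. -/
def Bm (z : Fin L → ℂ) (n : ℕ) (G : Matrix (Fin N) (Fin N) ℂ) (u : ℂ) :
    Matrix (Fin N) (Fin N) (Module.End ℂ (⨂[ℂ] i, V i)) :=
  ∑ k ∈ Finset.range n,
    tau n ^ k • (emb V (G ^ k) * Tm ρ z (tau n ^ k * u) * emb V (G⁻¹ ^ k))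

/-- `M_a = M ⊗ 1` as an `N²×N²` matrix. -/
def aM {A : Type} [Zero A] (M : Matrix (Fin N) (Fin N) A) :
    Matrix (Fin N × Fin N) (Fin N × Fin N) A :=
  Matrix.of fun p q => if p.2 = q.2 then M p.1 q.1 else 0

/-- `M_b = 1 ⊗ M` as an `N²×N²` matrix. -/
def bM {A : Type} [Zero A] (M : Matrix (Fin N) (Fin N) A) :
    Matrix (Fin N × Fin N) (Fin N × Fin N) A :=
  Matrix.of fun p q => if p.1 = q.1 then M p.2 q.2 else 0

/-- The permutation matrix `P_{ab} = Σ_{ij} E_{ij} ⊗ E_{ji}`. -/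
def PP (N : ℕ) (A : Type) [Zero A] [One A] :
    Matrix (Fin N × Fin N) (Fin N × Fin N) A :=
  Matrix.of fun p q => if p.1 = q.2 ∧ p.2 = q.1 then 1 else 0


/-!
Entrywise the exchange relation reads
`[T(u)_{ik}, T(v)_{jl}] = (u - v)⁻¹ (δ_{il} (T(v) - T(u))_{jk} - δ_{jk} (T(v) - T(u))_{il})`.
Operators at different sites commute and `X ↦ X^{(ℓ)}` preserves commutators, so the left side is
`Σ_ℓ (u - z_ℓ)⁻¹ (v - z_ℓ)⁻¹ [E_{ki}, E_{lj}]^{(ℓ)}`; the partial fraction identity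
`(u - z)⁻¹ (v - z)⁻¹ = (u - v)⁻¹ ((v - z)⁻¹ - (u - z)⁻¹)` turns it into the right side.
-/

namespace PiTensorProduct

variable {ι R : Type*} [DecidableEq ι] [CommSemiring R]
  {s : ι → Type*} [∀ i, AddCommMonoid (s i)] [∀ i, Module R (s i)]

def siteAlgHom (ℓ : ι) : Module.End R (s ℓ) →ₐ[R] Module.End R (⨂[R] i, s i) :=
  AlgHom.ofLinearMap ((mapMultilinear R s s).toLinearMap 1 ℓ)
    (by
      simp only [MultilinearMap.toLinearMap_apply, mapMultilinear_apply, Function.update_one]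
      exact PiTensorProduct.map_one)
    (fun A B => by
      have h := Function.update_mul (1 : ∀ i, Module.End R (s i)) 1 ℓ A B
      rw [one_mul] at h
      simp only [MultilinearMap.toLinearMap_apply, mapMultilinear_apply, h]
      exact PiTensorProduct.map_mul (R := R) (s := s) _ _)

theorem siteAlgHom_apply (ℓ : ι) (A : Module.End R (s ℓ)) :
    siteAlgHom ℓ A = map (Function.update 1 ℓ A) := rfl

theorem commute_siteAlgHom {ℓ m : ι} (h : ℓ ≠ m) (A : Module.End R (s ℓ))
    (B : Module.End R (s m)) : Commute (siteAlgHom ℓ A) (siteAlgHom m B) := by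
  rw [Commute, SemiconjBy, siteAlgHom_apply, siteAlgHom_apply, ← PiTensorProduct.map_mul,
    ← PiTensorProduct.map_mul]
  congr 1
  funext i
  rcases eq_or_ne i ℓ with rfl | hi
  · simp [h]
  · rcases eq_or_ne i m with rfl | hm <;> simp [*]

end PiTensorProduct

open PiTensorProduct

-- With this instance `⁅a, b⁆ = a * b - b * a`, so `hρ` says that each `ρ ℓ` preserves brackets.
attribute [local instance] LieRing.ofAssociativeRing

theorem Module.End.lie_smul_smul {R M : Type*} [CommRing R] [AddCommGroup M] [Module R M]
    (a b : R) (f g : Module.End R M) : ⁅a • f, b • g⁆ = (a * b) • ⁅f, g⁆ := by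
  rw [smul_lie, lie_smul, smul_smul]

theorem Matrix.lie_single_single {n α : Type*} [DecidableEq n] [Fintype n] [Ring α]
    (i j k l : n) (a b : α) :
    ⁅Matrix.single k i a, Matrix.single l j b⁆ =
      (if i = l then Matrix.single k j (a * b) else 0) -
        if j = k then Matrix.single l i (b * a) else 0 := by
  rw [Ring.lie_def]
  split_ifs <;> simp [Matrix.single_mul_single_of_ne, *]

theorem inv_sub_mul_inv_sub {K : Type*} [Field K] {u v z : K} (huv : u ≠ v) (hu : u ≠ z)
    (hv : v ≠ z) : (u - z)⁻¹ * (v - z)⁻¹ = (u - v)⁻¹ * ((v - z)⁻¹ - (u - z)⁻¹) := by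
  have := sub_ne_zero.2 huv
  have := sub_ne_zero.2 hu
  have := sub_ne_zero.2 hv
  field_simp
  ring

section Realization

variable {ρ}

theorem siteOp_eq_siteAlgHom (ℓ : Fin L) (X : Matrix (Fin N) (Fin N) ℂ) :
    siteOp ρ ℓ X = siteAlgHom ℓ (ρ ℓ X) := rfl

theorem siteOp_lie (hρ : ∀ ℓ X Y, ρ ℓ ⁅X, Y⁆ = ⁅ρ ℓ X, ρ ℓ Y⁆) (ℓ m : Fin L)
    (X Y : Matrix (Fin N) (Fin N) ℂ) :
    ⁅siteOp ρ ℓ X, siteOp ρ m Y⁆ = if ℓ = m then siteOp ρ ℓ ⁅X, Y⁆ else 0 := by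
  split_ifs with h
  · subst h
    simp only [siteOp_eq_siteAlgHom, hρ, ← AlgHom.toLieHom_apply, LieHom.map_lie]
  · exact (commute_siteAlgHom h _ _).lie_eq

theorem Pm_lie (hρ : ∀ ℓ X Y, ρ ℓ ⁅X, Y⁆ = ⁅ρ ℓ X, ρ ℓ Y⁆) (ℓ m : Fin L) (i j k l : Fin N) :
    ⁅Pm ρ ℓ i k, Pm ρ m j l⁆ =
      if ℓ = m then (if i = l then Pm ρ ℓ j k else 0) - if j = k then Pm ρ ℓ i l else 0
      else 0 := by
  simp only [Pm, Matrix.of_apply, siteOp_lie hρ, Matrix.lie_single_single, mul_one]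
  split_ifs <;> simp [siteOp_eq_siteAlgHom]

theorem Tm_apply (z : Fin L → ℂ) (w : ℂ) (i k : Fin N) :
    Tm ρ z w i k = ∑ ℓ, (w - z ℓ)⁻¹ • Pm ρ ℓ i k := by
  simp [Tm, Matrix.sum_apply]

theorem Tm_lie (hρ : ∀ ℓ X Y, ρ ℓ ⁅X, Y⁆ = ⁅ρ ℓ X, ρ ℓ Y⁆) (z : Fin L → ℂ) {u v : ℂ}
    (huv : u ≠ v) (hu : ∀ ℓ, u ≠ z ℓ) (hv : ∀ ℓ, v ≠ z ℓ) (i j k l : Fin N) :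
    ⁅Tm ρ z u i k, Tm ρ z v j l⁆ =
      (u - v)⁻¹ • (((if i = l then Tm ρ z v j k else 0) - if j = k then Tm ρ z v i l else 0) -
        ((if i = l then Tm ρ z u j k else 0) - if j = k then Tm ρ z u i l else 0)) := by
  set X : Fin L → Module.End ℂ (⨂[ℂ] i, V i) := fun ℓ =>
    (if i = l then Pm ρ ℓ j k else 0) - if j = k then Pm ρ ℓ i l else 0
  have sum_smul_X (w : ℂ) : ∑ ℓ, (w - z ℓ)⁻¹ • X ℓ =
      (if i = l then Tm ρ z w j k else 0) - if j = k then Tm ρ z w i l else 0 := by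
    split_ifs <;> simp [X, *, Tm_apply, smul_sub, Finset.sum_sub_distrib]
  calc ⁅Tm ρ z u i k, Tm ρ z v j l⁆ = ∑ ℓ, ((u - z ℓ)⁻¹ * (v - z ℓ)⁻¹) • X ℓ := by
        simp only [Tm_apply, sum_lie_sum, Module.End.lie_smul_smul, Pm_lie hρ, smul_ite,
          smul_zero, Finset.sum_ite_eq, Finset.mem_univ, if_true, X]
    _ = (u - v)⁻¹ • ∑ ℓ, ((v - z ℓ)⁻¹ • X ℓ - (u - z ℓ)⁻¹ • X ℓ) := by
        simp only [Finset.smul_sum, inv_sub_mul_inv_sub huv (hu _) (hv _), mul_smul, sub_smul]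
    _ = _ := by rw [Finset.sum_sub_distrib, sum_smul_X, sum_smul_X]

end Realization

section ExchangeRelation

variable {A : Type} [Ring A]

theorem lie_aM_bM_apply (M M' : Matrix (Fin N) (Fin N) A) (i j k l : Fin N) :
    ⁅aM M, bM M'⁆ (i, j) (k, l) = ⁅M i k, M' j l⁆ := by
  simp [Ring.lie_def, Matrix.sub_apply, Matrix.mul_apply, aM, bM, Fintype.sum_prod_type, mul_ite]

theorem lie_add_PP_apply (M M' : Matrix (Fin N) (Fin N) A) (i j k l : Fin N) :
    ⁅aM M + bM M', PP N A⁆ (i, j) (k, l) =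
      ((if i = l then M' j k else 0) - if j = k then M' i l else 0) -
        ((if i = l then M j k else 0) - if j = k then M i l else 0) := by
  rcases eq_or_ne i l with rfl | hil <;> rcases eq_or_ne j k with rfl | hjk <;>
    simp [Ring.lie_def, Matrix.mul_apply, aM, bM, PP, Fintype.sum_prod_type, ite_and, *] <;> abel

theorem lie_aM_bM_eq_of_lie_apply {R : Type*} [CommSemiring R] [Algebra R A]
    {M M' : Matrix (Fin N) (Fin N) A} {c : R}
    (h : ∀ i j k l, ⁅M i k, M' j l⁆ =
      c • (((if i = l then M' j k else 0) - if j = k then M' i l else 0) -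
        ((if i = l then M j k else 0) - if j = k then M i l else 0))) :
    ⁅aM M, bM M'⁆ = ⁅aM M + bM M', c • PP N A⁆ := by
  have lie_smul_PP : ⁅aM M + bM M', c • PP N A⁆ = c • ⁅aM M + bM M', PP N A⁆ := by
    simp only [Ring.lie_def, Matrix.mul_smul, Matrix.smul_mul, smul_sub]
  ext ⟨i, j⟩ ⟨k, l⟩
  rw [lie_smul_PP, Matrix.smul_apply, lie_aM_bM_apply, lie_add_PP_apply, h]

end ExchangeRelation

theorem statement1
    (hρ : ∀ ℓ (X Y : Matrix (Fin N) (Fin N) ℂ),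
      ρ ℓ (X * Y - Y * X) = ρ ℓ X * ρ ℓ Y - ρ ℓ Y * ρ ℓ X)
    (z : Fin L → ℂ)
    (u v : ℂ) (huv : u ≠ v) (hu : ∀ ℓ, u ≠ z ℓ) (hv : ∀ ℓ, v ≠ z ℓ) :
    aM (Tm ρ z u) * bM (Tm ρ z v) - bM (Tm ρ z v) * aM (Tm ρ z u) =
      (aM (Tm ρ z u) + bM (Tm ρ z v)) * ((u - v)⁻¹ • PP N (Module.End ℂ (⨂[ℂ] i, V i)))
        - ((u - v)⁻¹ • PP N (Module.End ℂ (⨂[ℂ] i, V i))) * (aM (Tm ρ z u) + bM (Tm ρ z v)) := by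
  simpa only [Ring.lie_def] using lie_aM_bM_eq_of_lie_apply (Tm_lie hρ z huv hu hv)
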